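/- Let G be a locally compact group with left invariant Haar measure μ and B a Banach space. Let Γ ⊆ L^1(G;B) be bounded and let S ⊆ G be compact. Assume that for every ε > 0 there exists j ∈ L^∞(G) with compact support such that ‖f − j⋆f‖_{1;G} < ε for every f ∈ Γ. Then the set Γ⁻ := {f⁻ : f ∈ Γ} is uniformly integrable on S. -/

import Mathlib

/-!
Write `f = (f - j⋆f) + j⋆f`. The first summand is small in `L¹(μ)`, and the second is
bounded on `S⁻¹` by `‖j‖_∞ ‖f‖₁` up to a constant, uniformly over the bounded set `Γ`, so
`∫_A ‖f(x⁻¹)‖ dμ(x) ≤ M μ(A) + C ε`. Both estimates rest on a comparison of `μ` with the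
right Haar measure `μ.inv` on compact sets: `μ(E⁻¹) ≤ C μ(E)` for `E ⊆ T`. For continuous
compactly supported functions this follows from Weil's formula
`∫ f dμ = (∫ f / D dμ.inv) ∫ g dμ`, where `D y = ∫ g (z⁻¹ y) dμ.inv(z)` is continuous and
positive, hence bounded on compacts; inner and outer regularity of the Haar measure `haar`
extend it to sets, and uniqueness of Haar measures to every `μ`.
-/

open MeasureTheory ENNReal Set Pointwise NNReal

theorem MeasureTheory.Measure.le_of_forall_isOpen_le {X : Type*} [TopologicalSpace X]
    [MeasurableSpace X] {μ ν : Measure X} [ν.OuterRegular]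
    (h : ∀ U, IsOpen U → μ U ≤ ν U) : μ ≤ ν := fun s => by
  rw [Set.measure_eq_iInf_isOpen s ν]
  exact le_iInf₂ fun U hsU => le_iInf fun hU => (measure_mono hsU).trans (h U hU)

theorem setLIntegral_comp_mul_left_le {G : Type*} [Group G] [MeasurableSpace G]
    [MeasurableMul G] (μ : Measure G) [μ.IsMulLeftInvariant] {S K : Set G} {x : G} (hx : x ∈ S)
    (φ : G → ℝ≥0∞) :
    ∫⁻ y in K, φ (x * y) ∂μ ≤ ∫⁻ z in S * K, φ z ∂μ := by
  rw [(measurePreserving_mul_left μ x).setLIntegral_comp_emb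
    (MeasurableEquiv.mulLeft x).measurableEmbedding]
  exact lintegral_mono_set (image_subset_iff.2 fun y hy => mul_mem_mul hx hy)

section HaarInversion

variable {G : Type*} [Group G] [TopologicalSpace G] [IsTopologicalGroup G]
  [LocallyCompactSpace G] [MeasurableSpace G] [BorelSpace G]

theorem exists_integral_inv_le_mul_integral (μ : Measure G) [μ.IsHaarMeasure]
    {K : Set G} (hK : IsCompact K) :
    ∃ c : ℝ≥0, ∀ f : G → ℝ, Continuous f → HasCompactSupport f → 0 ≤ f → tsupport f ⊆ K →
      ∫ x, f x ∂μ.inv ≤ c * ∫ x, f x ∂μ := by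
  obtain ⟨g, hgc, hg0, hg1⟩ := exists_continuous_nonneg_pos (1 : G)
  set D : G → ℝ := fun x => ∫ z, g (z⁻¹ * x) ∂μ.inv
  have hD_pos : ∀ x, 0 < D x := fun x =>
    Continuous.integral_pos_of_hasCompactSupport_nonneg_nonzero (f := fun z => g (z⁻¹ * x))
      (by fun_prop) (hgc.comp_homeomorph ((Homeomorph.inv G).trans (Homeomorph.mulRight x)))
      (fun z => hg0 (z⁻¹ * x)) (x := x) (by simpa using hg1)
  have hD_cont : Continuous D := continuous_integral_apply_inv_mul g.continuous hgc
  obtain ⟨M, hM⟩ := hK.exists_bound_of_continuousOn hD_cont.continuousOn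
  have hg_pos : 0 < ∫ x, g x ∂μ :=
    g.continuous.integral_pos_of_hasCompactSupport_nonneg_nonzero hgc hg0 hg1
  refine ⟨(max M 0 / ∫ x, g x ∂μ).toNNReal, fun f hf hfc hf0 hfK => ?_⟩
  have hweil : ∫ x, f x ∂μ = (∫ y, f y * (D y)⁻¹ ∂μ.inv) * ∫ x, g x ∂μ :=
    Measure.integral_isMulLeftInvariant_isMulRightInvariant_combo hf hfc g.continuous hgc hg0 hg1
  have hpt : ∀ y, f y ≤ max M 0 * (f y * (D y)⁻¹) := by
    intro y
    rcases eq_or_ne (f y) 0 with hy | hy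
    · simp [hy]
    have hDM : D y ≤ max M 0 :=
      (le_abs_self _).trans ((hM y (hfK (subset_tsupport f hy))).trans (le_max_left _ _))
    calc f y = D y * (f y * (D y)⁻¹) := by field_simp [(hD_pos y).ne']
      _ ≤ max M 0 * (f y * (D y)⁻¹) :=
        mul_le_mul_of_nonneg_right hDM (mul_nonneg (hf0 y) (inv_nonneg.2 (hD_pos y).le))
  have hfD : Integrable (fun y => f y * (D y)⁻¹) μ.inv :=
    (hf.mul (hD_cont.inv₀ fun y => (hD_pos y).ne')).integrable_of_hasCompactSupport
      hfc.mul_right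
  calc ∫ x, f x ∂μ.inv ≤ ∫ y, max M 0 * (f y * (D y)⁻¹) ∂μ.inv :=
        integral_mono (hf.integrable_of_hasCompactSupport hfc) (hfD.const_mul _) hpt
    _ = _ := by
      rw [integral_const_mul, hweil, Real.coe_toNNReal _ (by positivity)]
      field_simp

theorem exists_measure_inv_le_mul_measure_of_regular (μ : Measure G) [μ.IsHaarMeasure]
    [μ.Regular] {T : Set G} (hT : IsCompact T) :
    ∃ C : ℝ≥0, ∀ E ⊆ T, μ E⁻¹ ≤ C * μ E := by
  obtain ⟨K, hK, hTK⟩ := exists_compact_superset hT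
  obtain ⟨c, hc⟩ := exists_integral_inv_le_mul_integral μ hK
  have hopen : ∀ U, IsOpen U → U ⊆ K → μ.inv U ≤ c * μ U := by
    intro U hU hUK
    refine le_of_forall_lt fun r hr => ?_
    obtain ⟨F, hFU, hF, hrF⟩ := hU.exists_lt_isCompact hr
    obtain ⟨f, hf1, hfc, hfU, hf01⟩ := exists_continuousMap_one_of_isCompact_subset_isOpen hF hU hFU
    calc r < μ.inv F := hrF
      _ ≤ ENNReal.ofReal (∫ x, f x ∂μ.inv) :=
        (f.continuous.integrable_of_hasCompactSupport hfc).measure_le_integral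
          (.of_forall fun x => (hf01 x).1) fun x hx => by simp [hf1 hx]
      _ ≤ ENNReal.ofReal (c * ∫ x, f x ∂μ) :=
        ENNReal.ofReal_le_ofReal (hc f f.continuous hfc (fun x => (hf01 x).1) (hfU.trans hUK))
      _ ≤ c * μ U := by
        rw [ENNReal.ofReal_mul c.coe_nonneg, ENNReal.ofReal_coe_nnreal]
        gcongr
        exact integral_le_measure (fun x _ => (hf01 x).2)
          fun x hx => (image_eq_zero_of_notMem_tsupport fun h => hx (hfU h)).le
  have hle : μ.inv.restrict (interior K) ≤ c • μ :=
    Measure.le_of_forall_isOpen_le fun U hU => by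
      rw [Measure.restrict_apply hU.measurableSet, Measure.coe_nnreal_smul_apply]
      exact (hopen _ (hU.inter isOpen_interior) (inter_subset_right.trans interior_subset)).trans
        (by gcongr; exact inter_subset_left)
  refine ⟨c, fun E hE => ?_⟩
  rw [← Measure.inv_apply, ← Measure.restrict_eq_self μ.inv (hE.trans hTK),
    ← Measure.coe_nnreal_smul_apply]
  exact hle E

theorem exists_measure_inv_le_mul_measure (μ : Measure G) [μ.IsHaarMeasure]
    {T : Set G} (hT : IsCompact T) :
    ∃ C : ℝ≥0, ∀ E ⊆ T, μ E⁻¹ ≤ C * μ E := by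
  obtain ⟨C, hC⟩ := exists_measure_inv_le_mul_measure_of_regular (Measure.haar : Measure G) hT
  refine ⟨C, fun E hE => ?_⟩
  rw [Measure.measure_isMulInvariant_eq_smul_of_isCompact_closure μ Measure.haar
      (hT.inv.closure_of_subset (inv_subset_inv.2 hE)),
    Measure.measure_isMulInvariant_eq_smul_of_isCompact_closure μ Measure.haar
      (hT.closure_of_subset hE), ENNReal.smul_def, ENNReal.smul_def, smul_eq_mul, smul_eq_mul,
    mul_left_comm]
  gcongr
  exact hC E hE

theorem exists_setLIntegral_comp_inv_le (μ : Measure G) [μ.IsHaarMeasure]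
    {T : Set G} (hT : IsCompact T) :
    ∃ C : ℝ≥0, ∀ φ : G → ℝ≥0∞, ∫⁻ x in T, φ x⁻¹ ∂μ ≤ C * ∫⁻ x, φ x ∂μ := by
  obtain ⟨C, hC⟩ := exists_measure_inv_le_mul_measure μ hT.inv
  have hle : (μ.restrict T).map Inv.inv ≤ C • μ := Measure.le_intro fun s hs _ => by
    rw [Measure.map_apply measurable_inv hs, inv_preimage, Measure.restrict_apply hs.inv,
      Measure.coe_nnreal_smul_apply]
    calc μ (s⁻¹ ∩ T) = μ (s ∩ T⁻¹)⁻¹ := by rw [inter_inv, inv_inv]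
      _ ≤ C * μ (s ∩ T⁻¹) := hC _ inter_subset_right
      _ ≤ C * μ s := by gcongr; exact inter_subset_left
  refine ⟨C, fun φ => ?_⟩
  calc ∫⁻ x in T, φ x⁻¹ ∂μ = ∫⁻ x, φ x ∂(μ.restrict T).map Inv.inv :=
        (lintegral_map_equiv φ (MeasurableEquiv.inv G)).symm
    _ ≤ ∫⁻ x, φ x ∂(C • μ) := lintegral_mono' hle le_rfl
    _ = C * ∫⁻ x, φ x ∂μ := lintegral_smul_measure _ _

theorem exists_enorm_integral_smul_comp_inv_le (μ : Measure G) [μ.IsHaarMeasure]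
    {B : Type*} [NormedAddCommGroup B] [NormedSpace ℝ B] {j : G → ℝ} (hj : MemLp j ∞ μ)
    (hjc : HasCompactSupport j) {S : Set G} (hS : IsCompact S) :
    ∃ C : ℝ≥0, ∀ f : G → B, ∀ x ∈ S,
      ‖∫ y, j y • f (y⁻¹ * x⁻¹) ∂μ‖ₑ ≤ eLpNorm j ∞ μ * (C * eLpNorm f 1 μ) := by
  obtain ⟨C, hC⟩ := exists_setLIntegral_comp_inv_le μ (hS.mul hjc)
  refine ⟨C, fun f x hx => ?_⟩
  have hj_le : ∀ᵐ y ∂μ, ‖j y‖ₑ ≤ eLpNorm j ∞ μ := by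
    simpa [eLpNorm_exponent_top] using enorm_ae_le_eLpNormEssSup j μ
  calc ‖∫ y, j y • f (y⁻¹ * x⁻¹) ∂μ‖ₑ ≤ ∫⁻ y, ‖j y‖ₑ * ‖f (x * y)⁻¹‖ₑ ∂μ := by
        refine (enorm_integral_le_lintegral_enorm _).trans_eq ?_
        simp_rw [enorm_smul, mul_inv_rev]
    _ = ∫⁻ y in tsupport j, ‖j y‖ₑ * ‖f (x * y)⁻¹‖ₑ ∂μ :=
        (setLIntegral_eq_of_support_subset fun y hy =>
          subset_tsupport j fun hj0 => hy (by simp [hj0])).symm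
    _ ≤ ∫⁻ y in tsupport j, eLpNorm j ∞ μ * ‖f (x * y)⁻¹‖ₑ ∂μ :=
        lintegral_mono_ae (ae_restrict_of_ae (hj_le.mono fun y hy => by gcongr))
    _ = eLpNorm j ∞ μ * ∫⁻ y in tsupport j, ‖f (x * y)⁻¹‖ₑ ∂μ :=
        lintegral_const_mul' _ _ hj.eLpNorm_ne_top
    _ ≤ eLpNorm j ∞ μ * ∫⁻ z in S * tsupport j, ‖f z⁻¹‖ₑ ∂μ :=
        mul_le_mul_right (setLIntegral_comp_mul_left_le μ hx fun z => ‖f z⁻¹‖ₑ) _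
    _ ≤ eLpNorm j ∞ μ * (C * eLpNorm f 1 μ) := by
        rw [eLpNorm_one_eq_lintegral_enorm]
        gcongr
        exact hC _

end HaarInversion

theorem setLIntegral_enorm_comp_inv_le {G : Type*} [MeasurableSpace G] [Inv G]
    {B : Type*} [NormedAddCommGroup B] {μ : Measure G} {S A : Set G} {C M : ℝ≥0∞}
    (hC : ∀ φ : G → ℝ≥0∞, ∫⁻ x in S, φ x⁻¹ ∂μ ≤ C * ∫⁻ x, φ x ∂μ)
    (hA : MeasurableSet A) (hAS : A ⊆ S) {f g : G → B} (hg : ∀ x ∈ A, ‖g x⁻¹‖ₑ ≤ M) :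
    ∫⁻ x in A, ‖f x⁻¹‖ₑ ∂μ ≤ M * μ A + C * eLpNorm (f - g) 1 μ := by
  calc ∫⁻ x in A, ‖f x⁻¹‖ₑ ∂μ ≤ ∫⁻ x in A, M + ‖(f - g) x⁻¹‖ₑ ∂μ :=
        setLIntegral_mono' hA fun x hx => calc
          ‖f x⁻¹‖ₑ = ‖g x⁻¹ + (f - g) x⁻¹‖ₑ := by simp
          _ ≤ ‖g x⁻¹‖ₑ + ‖(f - g) x⁻¹‖ₑ := enorm_add_le _ _
          _ ≤ M + ‖(f - g) x⁻¹‖ₑ := by gcongr; exact hg x hx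
    _ = M * μ A + ∫⁻ x in A, ‖(f - g) x⁻¹‖ₑ ∂μ := by
        rw [lintegral_add_left measurable_const, setLIntegral_const]
    _ ≤ M * μ A + ∫⁻ x in S, ‖(f - g) x⁻¹‖ₑ ∂μ := by gcongr
    _ ≤ M * μ A + C * eLpNorm (f - g) 1 μ := by
        rw [eLpNorm_one_eq_lintegral_enorm]
        gcongr
        exact hC _

theorem uniformly_integrable_inverse_of_convolution_approx_general
    {G : Type*} [Group G] [TopologicalSpace G] [IsTopologicalGroup G]
    [LocallyCompactSpace G] [MeasurableSpace G] [BorelSpace G]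
    (μ : Measure G) [μ.IsHaarMeasure]
    {B : Type*} [NormedAddCommGroup B] [NormedSpace ℝ B]
    (Γ : Set (Lp B 1 μ)) (hΓ : Bornology.IsBounded Γ)
    (S : Set G) (hS : IsCompact S)
    (happrox : ∀ ε : ℝ, 0 < ε → ∃ j : G → ℝ,
      MemLp j ∞ μ ∧ HasCompactSupport j ∧
      ∀ f ∈ Γ,
        eLpNorm (fun x => f x - ∫ y, j y • f (y⁻¹ * x) ∂μ) 1 μ < ENNReal.ofReal ε) :
    ∀ ε : ℝ, 0 < ε → ∃ δ : ℝ, 0 < δ ∧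
      ∀ f ∈ Γ, ∀ A : Set G, A ⊆ S → MeasurableSet A → μ A < ENNReal.ofReal δ →
        (∫⁻ x in A, (‖f x⁻¹‖₊ : ℝ≥0∞) ∂μ) < ENNReal.ofReal ε := by
  intro ε hε
  have hη : ENNReal.ofReal ε / 2 ≠ 0 := (ENNReal.half_pos (ENNReal.ofReal_pos.2 hε).ne').ne'
  obtain ⟨R, hR⟩ := hΓ.exists_norm_le
  obtain ⟨C₁, hC₁⟩ := exists_setLIntegral_comp_inv_le μ hS
  obtain ⟨ε', hε', hC₁ε'⟩ := ENNReal.exists_nnreal_pos_mul_lt ENNReal.coe_ne_top hη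
  obtain ⟨j, hj, hjc, hjΓ⟩ := happrox ε' hε'
  obtain ⟨C₂, hC₂⟩ := exists_enorm_integral_smul_comp_inv_le (B := B) μ hj hjc hS
  set M := eLpNorm j ∞ μ * (C₂ * ENNReal.ofReal R)
  have hM : M ≠ ⊤ := by finiteness [hj.eLpNorm_ne_top]
  obtain ⟨δ, hδ, hδM⟩ := ENNReal.exists_nnreal_pos_mul_lt hM hη
  refine ⟨δ, hδ, fun f hf A hAS hA hAδ => ?_⟩
  have hconv : ∀ x ∈ A, ‖∫ y, j y • f (y⁻¹ * x⁻¹) ∂μ‖ₑ ≤ M := fun x hx => by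
    refine (hC₂ f x (hAS hx)).trans ?_
    rw [← Lp.enorm_def, ← ofReal_norm]
    exact mul_le_mul_right (mul_le_mul_right (ENNReal.ofReal_le_ofReal (hR f hf)) _) _
  rw [ENNReal.ofReal_coe_nnreal] at hAδ
  calc ∫⁻ x in A, (‖f x⁻¹‖₊ : ℝ≥0∞) ∂μ
      ≤ M * μ A + C₁ * eLpNorm (fun x => f x - ∫ y, j y • f (y⁻¹ * x) ∂μ) 1 μ :=
        setLIntegral_enorm_comp_inv_le hC₁ hA hAS hconv
    _ < ENNReal.ofReal ε / 2 + ENNReal.ofReal ε / 2 := by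
        gcongr ?_ + ?_
        · exact (mul_le_mul_right hAδ.le M).trans_lt (by rwa [mul_comm])
        · exact (mul_le_mul_right (hjΓ f hf).le _).trans_lt
            (by rwa [ENNReal.ofReal_coe_nnreal, mul_comm])
    _ = ENNReal.ofReal ε := ENNReal.add_halves _

/-- Lemma 3 of the paper: if a bounded `Γ ⊆ L¹(G;B)` can be uniformly
approximated by convolutions `j⋆f` with `j ∈ L^∞(G)` of compact support, then
`Γ⁻ = {x ↦ f (x⁻¹) : f ∈ Γ}` is uniformly integrable on any compact `S ⊆ G`. -/
theorem uniformly_integrable_inverse_of_convolution_approx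
    {G : Type*} [Group G] [TopologicalSpace G] [IsTopologicalGroup G]
    [LocallyCompactSpace G] [T2Space G] [MeasurableSpace G] [BorelSpace G]
    (μ : Measure G) [μ.IsHaarMeasure]
    {B : Type*} [NormedAddCommGroup B] [NormedSpace ℝ B] [CompleteSpace B]
    (Γ : Set (Lp B 1 μ)) (hΓ : Bornology.IsBounded Γ)
    (S : Set G) (hS : IsCompact S)
    (happrox : ∀ ε : ℝ, 0 < ε → ∃ j : G → ℝ,
      MemLp j ∞ μ ∧ HasCompactSupport j ∧
      ∀ f ∈ Γ,
        eLpNorm (fun x => f x - ∫ y, j y • f (y⁻¹ * x) ∂μ) 1 μ < ENNReal.ofReal ε) :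
    ∀ ε : ℝ, 0 < ε → ∃ δ : ℝ, 0 < δ ∧
      ∀ f ∈ Γ, ∀ A : Set G, A ⊆ S → MeasurableSet A → μ A < ENNReal.ofReal δ →
        (∫⁻ x in A, (‖f x⁻¹‖₊ : ℝ≥0∞) ∂μ) < ENNReal.ofReal ε :=
  uniformly_integrable_inverse_of_convolution_approx_general μ Γ hΓ S hS happrox
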